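/- arXiv:2601.07336 — 6 statements merged into one kernel-verified Lean document; each statement's English description precedes it below -/
import Mathlib

section
/- If D1 is a Condorcet domain on a set A of alternatives and D2 is a Condorcet domain on a set B of alternatives with A and B disjoint, then the set of all concatenations uv (u ∈ D1, v ∈ D2), viewed as linear orders on A ∪ B ranking every element of A above every element of B within u followed by v, is a Condorcet domain on A ∪ B. -/
/-- The majority relation of a profile `P` of `k` voters: `a` beats `b` if more voters
rank `a` above `b` than rank `b` above `a`. -/
def Maj {α : Type*} {k : ℕ} (P : Fin k → α → α → Prop) (a b : α) : Prop :=
  Nat.card {i : Fin k // P i a b} > Nat.card {i : Fin k // P i b a}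

/-- `D` is a Condorcet domain: a set of linear orders (strict total orders) on the
alternatives such that every profile with an odd number of voters drawn from `D`
has a transitive majority relation. -/
def IsCondorcetDomain {α : Type*} (D : Set (α → α → Prop)) : Prop :=
  (∀ r ∈ D, IsStrictTotalOrder α r) ∧
  ∀ (k : ℕ), Odd k → ∀ P : Fin k → α → α → Prop,
    (∀ i, P i ∈ D) → Transitive (Maj P)

/-- The concatenation `uv`: agrees with `u` on `α`, with `v` on `β`, and ranks every
element of `α` above every element of `β`. -/
def concatAB {α β : Type*} (u : α → α → Prop) (v : β → β → Prop) :
    α ⊕ β → α ⊕ β → Prop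
  | Sum.inl a, Sum.inl a' => u a a'
  | Sum.inl _, Sum.inr _ => True
  | Sum.inr _, Sum.inl _ => False
  | Sum.inr b, Sum.inr b' => v b b'

/-!
The concatenation `uv` is the lexicographic sum `Sum.Lex u v`, so it is a linear order
whenever `u` and `v` are. In a nonempty profile of concatenations every voter ranks each
`a ∈ A` above each `b ∈ B`, so `a` beats `b` unanimously, while the majority relation
restricted to `A` (resp. `B`) is that of the profile of the `A`-parts (resp. `B`-parts).
Hence the majority relation is itself the concatenation of the two majority relations,
which is transitive because both of them are.
-/

section Concat

variable {α β : Type*}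

theorem concatAB_eq_sumLex (u : α → α → Prop) (v : β → β → Prop) :
    concatAB u v = Sum.Lex u v := by
  ext (a | b) (a' | b') <;> simp [concatAB]

instance isStrictTotalOrder_concatAB (u : α → α → Prop) (v : β → β → Prop)
    [IsStrictTotalOrder α u] [IsStrictTotalOrder β v] :
    IsStrictTotalOrder (α ⊕ β) (concatAB u v) :=
  concatAB_eq_sumLex u v ▸ {}

theorem Transitive.concatAB {u : α → α → Prop} {v : β → β → Prop}
    (hu : Transitive u) (hv : Transitive v) : Transitive (concatAB u v) := by
  have : IsTrans α u := ⟨fun _ _ _ => @hu _ _ _⟩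
  have : IsTrans β v := ⟨fun _ _ _ => @hv _ _ _⟩
  rw [concatAB_eq_sumLex]
  exact fun _ _ _ => IsTrans.trans _ _ _

theorem maj_concatAB {k : ℕ} (hk : k ≠ 0) (u : Fin k → α → α → Prop)
    (v : Fin k → β → β → Prop) :
    Maj (fun i => concatAB (u i) (v i)) = concatAB (Maj u) (Maj v) := by
  ext (a | b) (a' | b')
  · rfl
  · simp [Maj, concatAB, Nat.pos_of_ne_zero hk]
  · simp [Maj, concatAB]
  · rfl

end Concat

/-- If `D1` is a Condorcet domain on `α` and `D2` is a Condorcet domain on `β`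
(disjoint sets of alternatives, modelled as a disjoint union `α ⊕ β`), then the set
of all concatenations `uv` is a Condorcet domain on `α ⊕ β`. -/
theorem concat_isCondorcetDomain {α β : Type*}
    (D1 : Set (α → α → Prop)) (D2 : Set (β → β → Prop))
    (h1 : IsCondorcetDomain D1) (h2 : IsCondorcetDomain D2) :
    IsCondorcetDomain {r : α ⊕ β → α ⊕ β → Prop |
      ∃ u ∈ D1, ∃ v ∈ D2, r = concatAB u v} := by
  obtain ⟨hD1, hMaj1⟩ := h1
  obtain ⟨hD2, hMaj2⟩ := h2
  refine ⟨?_, fun k hk P hP => ?_⟩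
  · rintro r ⟨u, hu, v, hv, rfl⟩
    have := hD1 u hu
    have := hD2 v hv
    infer_instance
  · choose u hu v hv hP using hP
    obtain rfl : P = fun i => concatAB (u i) (v i) := funext hP
    rw [maj_concatAB hk.pos.ne']
    exact (hMaj1 k hk u hu).concatAB (hMaj2 k hk v hv)
end

section
/- For all positive integers n and m, f(n+m) ≥ 2·f(n)·f(m), where f(k) denotes the maximum size of a Condorcet domain on a set of k alternatives. -/
/-- `maxCD n` is the maximum size of a Condorcet domain on `n` alternatives. -/
noncomputable def maxCD (n : ℕ) : ℕ :=
  sSup {s : ℕ | ∃ D : Set (Fin n → Fin n → Prop), IsCondorcetDomain D ∧ s = Nat.card D}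

/-!
Given Condorcet domains `D₁` on `α` and `D₂` on `β`, take every concatenation `uv`
(`u ∈ D₁` above `v ∈ D₂`) together with its twist, in which the first alternative of `v` is
moved just above the last alternative of `u`; these are `2 |D₁| |D₂|` distinct linear orders.
For a profile of them, the majority relation restricted to either block is the majority
relation of the block profile, hence transitive. An alternative `b` of `β` can beat an
alternative `a` of `α` only if a majority of voters rank `a` last in `α` and `b` first in
`β`; then `a` loses to, and `b` beats, every other alternative of its block by majority,
and these facts exclude every cycle through both blocks.
-/

open Function Sum

section Counting

variable {ι : Type*} [Finite ι] {p q : ι → Prop}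

theorem card_subtype_add_card_subtype_le (h : ∀ i, p i → ¬ q i) :
    Nat.card {i // p i} + Nat.card {i // q i} ≤ Nat.card ι := by
  rw [← Nat.card_sum]
  refine Nat.card_le_card_of_injective (Sum.elim Subtype.val Subtype.val) ?_
  rintro (⟨i, hi⟩ | ⟨i, hi⟩) (⟨j, hj⟩ | ⟨j, hj⟩) hij <;>
    simp only [Sum.elim_inl, Sum.elim_inr] at hij <;> subst hij
  exacts [rfl, (h i hi hj).elim, (h i hj hi).elim, rfl]

theorem card_subtype_add_card_subtype_eq (h : ∀ i, p i ↔ ¬ q i) :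
    Nat.card {i // p i} + Nat.card {i // q i} = Nat.card ι := by
  classical
  rw [← Nat.card_sum]
  exact Nat.card_congr <| ((Equiv.subtypeEquivRight h).sumCongr (Equiv.refl _)).trans
    ((Equiv.sumComm _ _).trans (Equiv.sumCompl q))

end Counting

section Majority

variable {α β : Type*} {k : ℕ} {P : Fin k → α → α → Prop} {x y : α}

theorem maj_iff_not_maj (hk : Odd k) (h : ∀ i, P i x y ↔ ¬ P i y x) :
    Maj P x y ↔ ¬ Maj P y x := by
  have hsum := card_subtype_add_card_subtype_eq h
  rw [Nat.card_fin] at hsum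
  rw [Nat.odd_iff] at hk
  unfold Maj
  omega

theorem Maj.of_imp {R : Fin k → β → β → Prop} {x' y' : β} (hP : ∀ i, P i x y ↔ ¬ P i y x)
    (hR : ∀ i, R i x' y' → ¬ R i y' x') (himp : ∀ i, P i x y → R i x' y')
    (h : Maj P x y) : Maj R x' y' := by
  have hPsum := card_subtype_add_card_subtype_eq hP
  have hRsum := card_subtype_add_card_subtype_le hR
  have hmono : Nat.card {i // P i x y} ≤ Nat.card {i // R i x' y'} :=
    Nat.card_le_card_of_injective (Subtype.map id himp) (Subtype.map_injective _ injective_id)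
  unfold Maj at *
  omega

end Majority

section FirstLast

variable {α : Type*}

def IsFirst (r : α → α → Prop) (a : α) : Prop := ∀ b ≠ a, r a b

def IsLast (r : α → α → Prop) (a : α) : Prop := ∀ b ≠ a, r b a

variable [Finite α] [Nonempty α] (r : α → α → Prop) [IsStrictTotalOrder α r]

theorem exists_isFirst : ∃ a, IsFirst r a := by
  obtain ⟨a, -, ha⟩ :=
    (Finite.wellFounded_of_trans_of_irrefl r).has_min Set.univ Set.univ_nonempty
  refine ⟨a, fun b hb => by_contra fun hab => hb ?_⟩
  exact (Std.Trichotomous.trichotomous a b hab (ha b trivial)).symm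

theorem exists_isLast : ∃ a, IsLast r a :=
  exists_isFirst (swap r)

end FirstLast

section TwistedConcat

variable {α β : Type*}

/-- Applied both to a single twisted concatenation and to the majority relation of a profile
of them. -/
theorem Sum.transitive_of_isFirst_isLast {R : α ⊕ β → α ⊕ β → Prop}
    (hl : Transitive (R on inl)) (hr : Transitive (R on inr)) (hasymm : ∀ x y, R x y → ¬ R y x)
    (hcross : ∀ a b, R (inl a) (inr b) ↔ ¬ R (inr b) (inl a))
    (hlast : ∀ a b, R (inr b) (inl a) → IsLast (R on inl) a)
    (hfirst : ∀ a b, R (inr b) (inl a) → IsFirst (R on inr) b) : Transitive R := by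
  have hirr : ∀ x, ¬ R x x := fun x h => hasymm x x h h
  rintro (a | b) (a' | b') (a'' | b'') h₁ h₂
  · exact hl h₁ h₂
  · refine (hcross a b'').2 fun h => hasymm _ _ h₁ (hlast a b'' h a' ?_)
    rintro rfl; exact hirr _ h₁
  · refine hlast a'' b' h₂ a ?_
    rintro rfl; exact (hcross a b').1 h₁ h₂
  · refine (hcross a b'').2 fun h => hasymm _ _ h₂ (hfirst a b'' h b' ?_)
    rintro rfl; exact hirr _ h₂
  · refine (hasymm _ _ h₂ (hlast a' b h₁ a'' ?_)).elim
    rintro rfl; exact hirr _ h₂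
  · refine hfirst a' b h₁ b'' ?_
    rintro rfl; exact (hcross a' _).1 h₂ h₁
  · refine (hasymm _ _ h₁ (hfirst a'' b' h₂ b ?_)).elim
    rintro rfl; exact hirr _ h₁
  · exact hr h₁ h₂

/-- The concatenation `uv` (all of `α` ranked above all of `β`); when `ε` holds, the first
alternative of `v` is moved just above the last one of `u`. -/
def twistedConcat (ε : Bool) (u : α → α → Prop) (v : β → β → Prop) : α ⊕ β → α ⊕ β → Prop
  | inl a, inl a' => u a a'
  | inr b, inr b' => v b b'
  | inl a, inr b => ¬ (ε = true ∧ IsFirst v b ∧ IsLast u a)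
  | inr b, inl a => ε = true ∧ IsFirst v b ∧ IsLast u a

theorem isStrictTotalOrder_twistedConcat (ε : Bool) {u : α → α → Prop} {v : β → β → Prop}
    (hu : IsStrictTotalOrder α u) (hv : IsStrictTotalOrder β v) :
    IsStrictTotalOrder (α ⊕ β) (twistedConcat ε u v) := by
  have hasymm : ∀ x y, twistedConcat ε u v x y → ¬ twistedConcat ε u v y x := by
    rintro (a | b) (a' | b') h h'
    exacts [asymm (r := u) h h', h h', h' h, asymm (r := v) h h']
  have htrans : Transitive (twistedConcat ε u v) :=
    Sum.transitive_of_isFirst_isLast (fun _ _ _ => IsTrans.trans (r := u) _ _ _)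
      (fun _ _ _ => IsTrans.trans (r := v) _ _ _) hasymm (fun _ _ => Iff.rfl)
      (fun _ _ h => h.2.2) (fun _ _ h => h.2.1)
  refine { trichotomous := ?_, irrefl := fun x h => hasymm x x h h,
            trans := fun _ _ _ => @htrans _ _ _ }
  rintro (a | b) (a' | b') h h'
  exacts [congrArg inl (Std.Trichotomous.trichotomous a a' h h'), (h h').elim,
    (h' h).elim, congrArg inr (Std.Trichotomous.trichotomous b b' h h')]

theorem twistedConcat_inj {ε ε' : Bool} {u u' : α → α → Prop} {v v' : β → β → Prop}
    {a : α} {b : β} (ha : IsLast u a) (hb : IsFirst v b)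
    (h : twistedConcat ε u v = twistedConcat ε' u' v') : ε = ε' ∧ u = u' ∧ v = v' := by
  obtain rfl : u = u' := funext₂ fun a a' => congrFun₂ h (inl a) (inl a')
  obtain rfl : v = v' := funext₂ fun b b' => congrFun₂ h (inr b) (inr b')
  have hε := congrFun₂ h (inr b) (inl a)
  simp only [twistedConcat, hb, ha, and_true, eq_iff_iff] at hε
  exact ⟨Bool.eq_iff_iff.2 hε, rfl, rfl⟩

def twistedConcatDomain (D₁ : Set (α → α → Prop)) (D₂ : Set (β → β → Prop)) :
    Set (α ⊕ β → α ⊕ β → Prop) :=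
  Set.range fun p : Bool × D₁ × D₂ => twistedConcat p.1 p.2.1 p.2.2

variable {D₁ : Set (α → α → Prop)} {D₂ : Set (β → β → Prop)}

theorem card_twistedConcatDomain [Finite α] [Nonempty α] [Finite β] [Nonempty β]
    (h₁ : ∀ u ∈ D₁, IsStrictTotalOrder α u) (h₂ : ∀ v ∈ D₂, IsStrictTotalOrder β v) :
    Nat.card (twistedConcatDomain D₁ D₂) = 2 * Nat.card D₁ * Nat.card D₂ := by
  rw [twistedConcatDomain, Nat.card_range_of_injective, Nat.card_prod, Nat.card_prod,
    Nat.card_eq_fintype_card (α := Bool), Fintype.card_bool, mul_assoc]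
  rintro ⟨ε, ⟨u, hu⟩, ⟨v, hv⟩⟩ ⟨ε', ⟨u', hu'⟩, ⟨v', hv'⟩⟩ h
  have := h₁ u hu
  have := h₂ v hv
  obtain ⟨a, ha⟩ := exists_isLast u
  obtain ⟨b, hb⟩ := exists_isFirst v
  obtain ⟨rfl, rfl, rfl⟩ := twistedConcat_inj ha hb h
  rfl

theorem IsCondorcetDomain.twistedConcatDomain (h₁ : IsCondorcetDomain D₁)
    (h₂ : IsCondorcetDomain D₂) : IsCondorcetDomain (twistedConcatDomain D₁ D₂) := by
  refine ⟨?_, fun k hk P hP => ?_⟩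
  · rintro _ ⟨⟨ε, ⟨u, hu⟩, ⟨v, hv⟩⟩, rfl⟩
    exact isStrictTotalOrder_twistedConcat ε (h₁.1 u hu) (h₂.1 v hv)
  choose p hp using hP
  obtain rfl : P = fun i => twistedConcat (p i).1 (p i).2.1 (p i).2.2 :=
    funext fun i => (hp i).symm
  have hu i a a' : (p i).2.1.1 a a' → ¬ (p i).2.1.1 a' a := have := h₁.1 _ (p i).2.1.2; asymm
  have hv i b b' : (p i).2.2.1 b b' → ¬ (p i).2.2.1 b' b := have := h₂.1 _ (p i).2.2.2; asymm
  refine Sum.transitive_of_isFirst_isLast (h₁.2 k hk _ fun i => (p i).2.1.2)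
    (h₂.2 k hk _ fun i => (p i).2.2.2) (fun _ _ => lt_asymm)
    (fun _ _ => maj_iff_not_maj hk fun _ => Iff.rfl) ?_ ?_
  · exact fun a b h a' ha' => h.of_imp (fun _ => not_not.symm) (fun i => hu i a' a)
      fun _ hi => hi.2.2 a' ha'
  · exact fun a b h b' hb' => h.of_imp (fun _ => not_not.symm) (fun i => hv i b b')
      fun _ hi => hi.2.1 b' hb'

end TwistedConcat

section Relabel

variable {α β : Type*} {D : Set (α → α → Prop)}

theorem IsCondorcetDomain.image_preimage_equiv (hD : IsCondorcetDomain D) (e : α ≃ β) :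
    IsCondorcetDomain ((e.symm ⁻¹'o ·) '' D) := by
  refine ⟨?_, fun k hk P hP => ?_⟩
  · rintro _ ⟨r, hr, rfl⟩
    have := hD.1 r hr
    exact (RelIso.preimage e.symm r).toRelEmbedding.isStrictTotalOrder
  choose Q hQ hPQ using hP
  obtain rfl : P = fun i => e.symm ⁻¹'o Q i := funext fun i => (hPQ i).symm
  exact fun _ _ _ hxy hyz => hD.2 k hk Q hQ hxy hyz

theorem preimage_equiv_injective (e : α ≃ β) :
    Injective fun r : α → α → Prop => e.symm ⁻¹'o r := by
  intro r r' h
  funext a a'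
  simpa [Order.Preimage] using congrFun₂ h (e a) (e a')

end Relabel

theorem maxCD_bddAbove (N : ℕ) : BddAbove {s : ℕ | ∃ D : Set (Fin N → Fin N → Prop),
    IsCondorcetDomain D ∧ s = Nat.card D} :=
  ⟨Nat.card (Fin N → Fin N → Prop), by
    rintro _ ⟨D, -, rfl⟩
    exact Finite.card_subtype_le (· ∈ D)⟩

theorem isCondorcetDomain_empty {α : Type*} : IsCondorcetDomain (∅ : Set (α → α → Prop)) :=
  ⟨fun _ h => h.elim, fun _ hk _ hP => (hP ⟨0, hk.pos⟩).elim⟩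

theorem exists_isCondorcetDomain_card_eq_maxCD (N : ℕ) :
    ∃ D : Set (Fin N → Fin N → Prop), IsCondorcetDomain D ∧ maxCD N = Nat.card D :=
  Nat.sSup_mem
    (s := {s | ∃ D : Set (Fin N → Fin N → Prop), IsCondorcetDomain D ∧ s = Nat.card D})
    ⟨0, ∅, isCondorcetDomain_empty, by simp⟩ (maxCD_bddAbove N)

theorem IsCondorcetDomain.card_le_maxCD {α : Type*} {D : Set (α → α → Prop)}
    (hD : IsCondorcetDomain D) {N : ℕ} (e : α ≃ Fin N) : Nat.card D ≤ maxCD N := by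
  rw [← Nat.card_image_of_injective (preimage_equiv_injective e)]
  exact le_csSup (maxCD_bddAbove N) ⟨_, hD.image_preimage_equiv e, rfl⟩

/-- For all positive integers `n` and `m`, `f(n+m) ≥ 2·f(n)·f(m)`. -/
theorem maxCD_superadditive (n m : ℕ) (hn : 1 ≤ n) (hm : 1 ≤ m) :
    2 * maxCD n * maxCD m ≤ maxCD (n + m) := by
  have : Nonempty (Fin n) := ⟨⟨0, hn⟩⟩
  have : Nonempty (Fin m) := ⟨⟨0, hm⟩⟩
  obtain ⟨D₁, hD₁, h₁⟩ := exists_isCondorcetDomain_card_eq_maxCD n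
  obtain ⟨D₂, hD₂, h₂⟩ := exists_isCondorcetDomain_card_eq_maxCD m
  calc 2 * maxCD n * maxCD m = Nat.card (twistedConcatDomain D₁ D₂) := by
        rw [h₁, h₂, card_twistedConcatDomain hD₁.1 hD₂.1]
    _ ≤ maxCD (n + m) := (hD₁.twistedConcatDomain hD₂).card_le_maxCD finSumFinEquiv
end

section
/- If D1 is a Condorcet domain on A and D2 is a Condorcet domain on B with A, B disjoint, A, B nonempty, |D1| = s and |D2| = t, then there exists a Condorcet domain on A ∪ B of size at least 2·s·t. -/
/-!
For every pair `(u, v)` take the concatenation `uv` (all of `α` above all of `β`) and the order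
obtained from it by transposing its two middle elements, the bottom of `u` and the top of `v`.
In each of these `2·s·t` orders at most one element of `β` lies above an element of `α`, so a
voter ranking `b` above `a` also ranks every other `a'` above `a` and `b` above every other `b'`.
Hence a majority for `b` over `a` forces majorities for `a'` over `a` and for `b` over `b'`, which
rules out every majority cycle through `a` and `b`; cycles inside `α` or `β` are excluded by
`D1` and `D2`. With an odd number of voters the majority relation is complete, so having no
3-cycles makes it transitive. The orders are pairwise distinct, since each one is determined by
its two restrictions and by whether it has such an inversion.
-/

open Function Sum

section Majority

variable {α : Type*} {k : ℕ} {P : Fin k → α → α → Prop}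

theorem maj_irrefl (x : α) : ¬ Maj P x x := lt_irrefl _

theorem Maj.asymm {x y : α} (h : Maj P x y) : ¬ Maj P y x := lt_asymm h

variable [∀ i, IsStrictTotalOrder α (P i)]

theorem card_rel_add_card_rel {x y : α} (hxy : x ≠ y) :
    Nat.card {i // P i x y} + Nat.card {i // P i y x} = k := by
  classical
  have hyx : {i // P i y x} ≃ {i // ¬ P i x y} := Equiv.subtypeEquivRight fun i =>
    ⟨asymm_of (P i), fun h => ((trichotomous_of (P i) x y).resolve_left h).resolve_left hxy⟩
  rw [Nat.card_congr hyx, ← Nat.card_sum, Nat.card_congr (Equiv.sumCompl _), Nat.card_fin]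

theorem maj_iff_lt_two_mul {x y : α} (hxy : x ≠ y) :
    Maj P x y ↔ k < 2 * Nat.card {i // P i x y} := by
  have := card_rel_add_card_rel (P := P) hxy
  unfold Maj
  omega

theorem Maj.mono {x y x' y' : α} (hxy' : x' ≠ y') (hsub : ∀ i, P i x y → P i x' y')
    (h : Maj P x y) : Maj P x' y' := by
  have hxy : x ≠ y := by rintro rfl; exact maj_irrefl x h
  rw [maj_iff_lt_two_mul hxy] at h
  rw [maj_iff_lt_two_mul hxy']
  exact h.trans_le <| Nat.mul_le_mul_left 2 <|
    Nat.card_le_card_of_injective _ (Subtype.impEmbedding _ _ hsub).injective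

theorem maj_or_maj_of_odd (hk : Odd k) {x y : α} (hxy : x ≠ y) : Maj P x y ∨ Maj P y x := by
  have := card_rel_add_card_rel (P := P) hxy
  unfold Maj
  obtain ⟨m, rfl⟩ := hk
  omega

theorem transitive_maj_of_acyclic (hk : Odd k)
    (hcyc : ∀ x y z, Maj P x y → Maj P y z → ¬ Maj P z x) : Transitive (Maj P) := by
  intro x y z hxy hyz
  have hxz : x ≠ z := by rintro rfl; exact hxy.asymm hyz
  exact (maj_or_maj_of_odd hk hxz).resolve_right (hcyc x y z hxy hyz)

end Majority

section Adjacent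

variable {γ : Type*}

def swapAdjacent (r : γ → γ → Prop) (p q : γ) (x y : γ) : Prop :=
  (x = q ∧ y = p) ∨ (r x y ∧ ¬(x = p ∧ y = q))

theorem isStrictTotalOrder_swapAdjacent {r : γ → γ → Prop} [IsStrictTotalOrder γ r] {p q : γ}
    (hpq : r p q) (hadj : ∀ z, r p z → ¬ r z q) :
    IsStrictTotalOrder γ (swapAdjacent r p q) where
  trichotomous x y := by grind [swapAdjacent, trichotomous_of r]
  irrefl x := by grind [swapAdjacent, irrefl_of r, ne_of_irrefl' hpq]
  -- a chain through the swapped pair that breaks transitivity would put an element strictly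
  -- between `p` and `q`
  trans x y z := by grind [swapAdjacent, irrefl_of r, trans_of r, trichotomous_of r]

end Adjacent

theorem exists_forall_not_rel {α : Type*} [Finite α] [Nonempty α] (r : α → α → Prop)
    [IsStrictOrder α r] : ∃ a, ∀ b, ¬ r b a := by
  obtain ⟨a, -, h⟩ := (Finite.wellFounded_of_trans_of_irrefl r).has_min Set.univ Set.univ_nonempty
  exact ⟨a, fun b => h b trivial⟩

section Concatenation

variable {α β : Type*}

def crossInversions (r : α ⊕ β → α ⊕ β → Prop) : Set (β × α) :=
  {p | r (inr p.1) (inl p.2)}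

section

variable {r : α ⊕ β → α ⊕ β → Prop} [IsStrictTotalOrder (α ⊕ β) r]

theorem rel_inl_inl_of_rel_inr_inl (hr : (crossInversions r).Subsingleton) {a a' : α} {b : β}
    (hba : r (inr b) (inl a)) (ha : a' ≠ a) : r (inl a') (inl a) := by
  rcases trichotomous_of r (inl a') (inr b) with h | h | h
  · exact trans_of r h hba
  · cases h
  · exact absurd (congrArg Prod.snd (hr (x := (b, a')) (y := (b, a)) h hba)) ha

theorem rel_inr_inr_of_rel_inr_inl (hr : (crossInversions r).Subsingleton) {a : α} {b b' : β}
    (hba : r (inr b) (inl a)) (hb : b' ≠ b) : r (inr b) (inr b') := by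
  rcases trichotomous_of r (inl a) (inr b') with h | h | h
  · exact trans_of r hba h
  · cases h
  · exact absurd (congrArg Prod.fst (hr (x := (b', a)) (y := (b, a)) h hba)) hb

end

theorem not_maj_inr_of_maj_inr_inl {k : ℕ} {P : Fin k → α ⊕ β → α ⊕ β → Prop}
    [∀ i, IsStrictTotalOrder (α ⊕ β) (P i)] (hP : ∀ i, (crossInversions (P i)).Subsingleton)
    {a : α} {b : β} {w : α ⊕ β} (hba : Maj P (inr b) (inl a)) (haw : Maj P (inl a) w) :
    ¬ Maj P w (inr b) := by
  intro hwb
  cases w with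
  | inl a' =>
    have ha : a' ≠ a := by rintro rfl; exact maj_irrefl _ haw
    refine (hba.mono ?_ fun i h => rel_inl_inl_of_rel_inr_inl (hP i) h ha).asymm haw
    simpa using ha
  | inr b' =>
    have hb : b' ≠ b := by rintro rfl; exact maj_irrefl _ hwb
    refine (hba.mono ?_ fun i h => rel_inr_inr_of_rel_inr_inl (hP i) h hb).asymm hwb
    simpa using hb.symm

theorem isCondorcetDomain_of_subsingleton_crossInversions {D₁ : Set (α → α → Prop)}
    {D₂ : Set (β → β → Prop)} {D : Set (α ⊕ β → α ⊕ β → Prop)}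
    (h₁ : IsCondorcetDomain D₁) (h₂ : IsCondorcetDomain D₂)
    (hD : ∀ r ∈ D, IsStrictTotalOrder (α ⊕ β) r)
    (hcross : ∀ r ∈ D, (crossInversions r).Subsingleton)
    (hinl : ∀ r ∈ D, (r on inl) ∈ D₁) (hinr : ∀ r ∈ D, (r on inr) ∈ D₂) :
    IsCondorcetDomain D := by
  refine ⟨hD, fun k hk P hPD => ?_⟩
  have := fun i => hD _ (hPD i)
  have hP := fun i => hcross _ (hPD i)
  have hA := h₁.2 k hk (fun i => P i on inl) fun i => hinl _ (hPD i)
  have hB := h₂.2 k hk (fun i => P i on inr) fun i => hinr _ (hPD i)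
  refine transitive_maj_of_acyclic hk ?_
  rintro (a | b) (a' | b') (a'' | b'') hxy hyz hzx
  · exact (hA hxy hyz).asymm hzx
  · exact not_maj_inr_of_maj_inr_inl hP hzx hxy hyz
  · exact not_maj_inr_of_maj_inr_inl hP hyz hzx hxy
  · exact not_maj_inr_of_maj_inr_inl hP hzx hxy hyz
  · exact not_maj_inr_of_maj_inr_inl hP hxy hyz hzx
  · exact not_maj_inr_of_maj_inr_inl hP hxy hyz hzx
  · exact not_maj_inr_of_maj_inr_inl hP hyz hzx hxy
  · exact (hB hxy hyz).asymm hzx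

variable {a₀ : α} {b₀ : β} {u : α → α → Prop} {v : β → β → Prop}

instance [IsStrictTotalOrder α u] [IsStrictTotalOrder β v] :
    IsStrictTotalOrder (α ⊕ β) (Sum.Lex u v) where
  irrefl := irrefl_of _
  trans _ _ _ := trans_of _

def lexOrSwap (a₀ : α) (b₀ : β) (u : α → α → Prop) (v : β → β → Prop) :
    Bool → α ⊕ β → α ⊕ β → Prop
  | false => Sum.Lex u v
  | true => swapAdjacent (Sum.Lex u v) (inl a₀) (inr b₀)

theorem isStrictTotalOrder_lexOrSwap [IsStrictTotalOrder α u] [IsStrictTotalOrder β v]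
    (ha₀ : ∀ a, ¬ u a₀ a) (hb₀ : ∀ b, ¬ v b b₀) (c : Bool) :
    IsStrictTotalOrder (α ⊕ β) (lexOrSwap a₀ b₀ u v c) := by
  cases c
  · exact inferInstanceAs (IsStrictTotalOrder _ (Sum.Lex u v))
  · refine isStrictTotalOrder_swapAdjacent (Sum.Lex.sep _ _) ?_
    rintro (a | b) h h'
    · exact ha₀ a (Sum.lex_inl_inl.1 h)
    · exact hb₀ b (Sum.lex_inr_inr.1 h')

theorem lexOrSwap_onFun_inl (c : Bool) : (lexOrSwap a₀ b₀ u v c on inl) = u := by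
  cases c <;> funext a a' <;> simp [lexOrSwap, swapAdjacent, onFun]

theorem lexOrSwap_onFun_inr (c : Bool) : (lexOrSwap a₀ b₀ u v c on inr) = v := by
  cases c <;> funext b b' <;> simp [lexOrSwap, swapAdjacent, onFun]

theorem crossInversions_lexOrSwap (c : Bool) :
    crossInversions (lexOrSwap a₀ b₀ u v c) = if c then {(b₀, a₀)} else ∅ := by
  cases c <;> ext ⟨b, a⟩ <;> simp [crossInversions, lexOrSwap, swapAdjacent, and_comm]

theorem subsingleton_crossInversions_lexOrSwap (c : Bool) :
    (crossInversions (lexOrSwap a₀ b₀ u v c)).Subsingleton := by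
  rw [crossInversions_lexOrSwap]
  split <;> simp

theorem eq_of_lexOrSwap_eq {a₀' : α} {b₀' : β} {u' : α → α → Prop} {v' : β → β → Prop}
    {c c' : Bool} (h : lexOrSwap a₀ b₀ u v c = lexOrSwap a₀' b₀' u' v' c') :
    u = u' ∧ v = v' ∧ c = c' := by
  refine ⟨?_, ?_, ?_⟩
  · simpa only [lexOrSwap_onFun_inl] using congrArg (· on inl) h
  · simpa only [lexOrSwap_onFun_inr] using congrArg (· on inr) h
  · have := congrArg crossInversions h
    rw [crossInversions_lexOrSwap, crossInversions_lexOrSwap] at this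
    cases c <;> cases c' <;> simp at this ⊢

end Concatenation

/-- Given Condorcet domains of sizes `s` and `t` on disjoint nonempty finite sets of
alternatives (modelled as a disjoint union `α ⊕ β`), there is a Condorcet domain on
the union of size at least `2·s·t`. -/
theorem exists_condorcet_of_size_two_mul {α β : Type*} [Fintype α] [Fintype β]
    [Nonempty α] [Nonempty β]
    (D1 : Set (α → α → Prop)) (D2 : Set (β → β → Prop))
    (h1 : IsCondorcetDomain D1) (h2 : IsCondorcetDomain D2)
    (s t : ℕ) (hs : Nat.card D1 = s) (ht : Nat.card D2 = t) :
    ∃ D : Set (α ⊕ β → α ⊕ β → Prop),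
      IsCondorcetDomain D ∧ 2 * s * t ≤ Nat.card D := by
  have hbot (u : D1) : ∃ a₀, ∀ a, ¬ u.1 a₀ a :=
    have := h1.1 u u.2; exists_forall_not_rel (swap u.1)
  have htop (v : D2) : ∃ b₀, ∀ b, ¬ v.1 b b₀ :=
    have := h2.1 v v.2; exists_forall_not_rel v.1
  choose bot hbot using hbot
  choose top htop using htop
  let f (p : D1 × D2 × Bool) := lexOrSwap (bot p.1) (top p.2.1) p.1.1 p.2.1.1 p.2.2
  have hf : Injective f := by
    rintro ⟨u, v, c⟩ ⟨u', v', c'⟩ h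
    obtain ⟨hu, hv, hc⟩ := eq_of_lexOrSwap_eq h
    exact Prod.ext (Subtype.ext hu) (Prod.ext (Subtype.ext hv) hc)
  refine ⟨Set.range f, isCondorcetDomain_of_subsingleton_crossInversions h1 h2 ?_ ?_ ?_ ?_, ?_⟩
  · rintro _ ⟨⟨u, v, c⟩, rfl⟩
    have := h1.1 u u.2
    have := h2.1 v v.2
    exact isStrictTotalOrder_lexOrSwap (hbot u) (htop v) c
  · rintro _ ⟨p, rfl⟩
    exact subsingleton_crossInversions_lexOrSwap _
  · rintro _ ⟨⟨u, v, c⟩, rfl⟩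
    simpa only [f, lexOrSwap_onFun_inl] using u.2
  · rintro _ ⟨⟨u, v, c⟩, rfl⟩
    simpa only [f, lexOrSwap_onFun_inr] using v.2
  · rw [Nat.card_range_of_injective hf, Nat.card_prod, Nat.card_prod, hs, ht]
    simp [mul_comm, mul_left_comm]
end

section
/- Let D1 be a domain on A and D2 a domain on B with A, B disjoint, and suppose that for every subset T1 ⊆ A with 1 ≤ |T1| ≤ t the restriction of D1 to T1 has size at least 2^{|T1|−1}, and similarly for D2. Let D be the domain on A ∪ B consisting of all concatenations uv and vu for u ∈ D1, v ∈ D2. Then for every subset T ⊆ A ∪ B with 1 ≤ |T| ≤ t, the restriction of D to T has size at least 2^{|T|−1}. -/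
/-- The restriction of a domain to a subset `T` of the alternatives. -/
def restrictDomain {α : Type*} (D : Set (α → α → Prop)) (T : Set α) :
    Set (T → T → Prop) :=
  (fun r => fun a b : T => r a.1 b.1) '' D

/-- The concatenation `vu`: agrees with `u` on `α`, with `v` on `β`, and ranks every
element of `β` above every element of `α`. -/
def concatBA {α β : Type*} (u : α → α → Prop) (v : β → β → Prop) :
    α ⊕ β → α ⊕ β → Prop
  | Sum.inl a, Sum.inl a' => u a a'
  | Sum.inl _, Sum.inr _ => False
  | Sum.inr _, Sum.inl _ => True
  | Sum.inr b, Sum.inr b' => v b b'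

/-- Abundance is preserved by the `uv`/`vu` construction: if the restriction of `D1`
(resp. `D2`) to every nonempty subset `T₁` with `|T₁| ≤ t` has size at least
`2^{|T₁|-1}`, then the domain of all concatenations `uv` and `vu` has the same
property for all nonempty subsets `T` of the union with `|T| ≤ t`. -/
theorem abundance_of_concat {α β : Type*} [Fintype α] [Fintype β]
    [Nonempty α] [Nonempty β]
    (D1 : Set (α → α → Prop)) (D2 : Set (β → β → Prop)) (t : ℕ)
    (h1 : ∀ T1 : Set α, 1 ≤ T1.ncard → T1.ncard ≤ t →
      2 ^ (T1.ncard - 1) ≤ Nat.card (restrictDomain D1 T1))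
    (h2 : ∀ T2 : Set β, 1 ≤ T2.ncard → T2.ncard ≤ t →
      2 ^ (T2.ncard - 1) ≤ Nat.card (restrictDomain D2 T2)) :
    ∀ T : Set (α ⊕ β), 1 ≤ T.ncard → T.ncard ≤ t →
      2 ^ (T.ncard - 1) ≤ Nat.card (restrictDomain
        {r | ∃ u ∈ D1, ∃ v ∈ D2, r = concatAB u v ∨ r = concatBA u v} T) := by
  classical
  intro T hT1c hTt
  set D : Set (α ⊕ β → α ⊕ β → Prop) :=
    {r | ∃ u ∈ D1, ∃ v ∈ D2, r = concatAB u v ∨ r = concatBA u v} with hD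
  set T1 : Set α := Sum.inl ⁻¹' T with hT1def
  set T2 : Set β := Sum.inr ⁻¹' T with hT2def
  have ht : 1 ≤ t := hT1c.trans hTt
  -- split of the cardinality
  have hsplit : T.ncard = T1.ncard + T2.ncard := by
    have hTeq : T = (Sum.inl '' T1) ∪ (Sum.inr '' T2) := by
      ext x; cases x <;> simp [hT1def, hT2def]
    rw [hTeq, Set.ncard_union_eq (by
        rw [Set.disjoint_left]
        rintro x ⟨a, _, rfl⟩ ⟨b, _, hb⟩
        exact Sum.inl_ne_inr hb.symm)
      ((Set.toFinite T1).image _) ((Set.toFinite T2).image _),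
      Set.ncard_image_of_injective _ Sum.inl_injective,
      Set.ncard_image_of_injective _ Sum.inr_injective]
  -- D1 and D2 are nonempty
  obtain ⟨a0'⟩ := ‹Nonempty α›
  obtain ⟨b0'⟩ := ‹Nonempty β›
  have hD1ne : ∃ u, u ∈ D1 := by
    have h := h1 {a0'} (by simp) (by simpa using ht)
    have hpos : 0 < Nat.card ↥(restrictDomain D1 {a0'}) :=
      lt_of_lt_of_le (pow_pos two_pos _) h
    have : Nonempty ↥(restrictDomain D1 {a0'}) := (Nat.card_pos_iff.mp hpos).1
    obtain ⟨⟨r, u, hu, _⟩⟩ := this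
    exact ⟨u, hu⟩
  have hD2ne : ∃ v, v ∈ D2 := by
    have h := h2 {b0'} (by simp) (by simpa using ht)
    have hpos : 0 < Nat.card ↥(restrictDomain D2 {b0'}) :=
      lt_of_lt_of_le (pow_pos two_pos _) h
    have : Nonempty ↥(restrictDomain D2 {b0'}) := (Nat.card_pos_iff.mp hpos).1
    obtain ⟨⟨r, v, hv, _⟩⟩ := this
    exact ⟨v, hv⟩
  obtain ⟨u0, hu0⟩ := hD1ne
  obtain ⟨v0, hv0⟩ := hD2ne
  -- extraction lemmas
  have key1 : ∀ r : ↥(restrictDomain D1 T1), ∃ u, u ∈ D1 ∧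
      ∀ a b : T1, r.1 a b = u a.1 b.1 := by
    rintro ⟨r, u, hu, rfl⟩
    exact ⟨u, hu, fun a b => rfl⟩
  have key2 : ∀ r : ↥(restrictDomain D2 T2), ∃ v, v ∈ D2 ∧
      ∀ a b : T2, r.1 a b = v a.1 b.1 := by
    rintro ⟨r, v, hv, rfl⟩
    exact ⟨v, hv, fun a b => rfl⟩
  rcases Nat.eq_zero_or_pos T2.ncard with h20 | h2pos
  · -- T2 is empty; inject the restriction of D1 to T1
    have hT1pos : 1 ≤ T1.ncard := by omega
    have hT1le : T1.ncard ≤ t := by omega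
    set f : ↥(restrictDomain D1 T1) → ↥(restrictDomain D T) := fun r =>
      ⟨fun x y => concatAB (key1 r).choose v0 x.1 y.1,
        concatAB (key1 r).choose v0,
        ⟨(key1 r).choose, (key1 r).choose_spec.1, v0, hv0, Or.inl rfl⟩, rfl⟩ with hf
    have hinj : Function.Injective f := by
      intro r r' h
      apply Subtype.ext
      funext a b
      have h' := congrFun (congrFun (congrArg Subtype.val h)
        ⟨Sum.inl a.1, a.2⟩) ⟨Sum.inl b.1, b.2⟩
      rw [(key1 r).choose_spec.2 a b, (key1 r').choose_spec.2 a b]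
      exact h'
    calc 2 ^ (T.ncard - 1) = 2 ^ (T1.ncard - 1) := by rw [hsplit, h20, Nat.add_zero]
      _ ≤ Nat.card ↥(restrictDomain D1 T1) := h1 T1 hT1pos hT1le
      _ ≤ Nat.card ↥(restrictDomain D T) := Nat.card_le_card_of_injective f hinj
  rcases Nat.eq_zero_or_pos T1.ncard with h10 | h1pos
  · -- T1 is empty; inject the restriction of D2 to T2
    have hT2le : T2.ncard ≤ t := by omega
    set f : ↥(restrictDomain D2 T2) → ↥(restrictDomain D T) := fun r =>
      ⟨fun x y => concatAB u0 (key2 r).choose x.1 y.1,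
        concatAB u0 (key2 r).choose,
        ⟨u0, hu0, (key2 r).choose, (key2 r).choose_spec.1, Or.inl rfl⟩, rfl⟩ with hf
    have hinj : Function.Injective f := by
      intro r r' h
      apply Subtype.ext
      funext a b
      have h' := congrFun (congrFun (congrArg Subtype.val h)
        ⟨Sum.inr a.1, a.2⟩) ⟨Sum.inr b.1, b.2⟩
      rw [(key2 r).choose_spec.2 a b, (key2 r').choose_spec.2 a b]
      exact h'
    calc 2 ^ (T.ncard - 1) = 2 ^ (T2.ncard - 1) := by rw [hsplit, h10, Nat.zero_add]
      _ ≤ Nat.card ↥(restrictDomain D2 T2) := h2 T2 h2pos hT2le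
      _ ≤ Nat.card ↥(restrictDomain D T) := Nat.card_le_card_of_injective f hinj
  · -- mixed case
    have hT1le : T1.ncard ≤ t := by omega
    have hT2le : T2.ncard ≤ t := by omega
    obtain ⟨a0, ha0⟩ := Set.nonempty_of_ncard_ne_zero (by omega : T1.ncard ≠ 0)
    obtain ⟨c0, hc0⟩ := Set.nonempty_of_ncard_ne_zero (by omega : T2.ncard ≠ 0)
    set f : Bool × ↥(restrictDomain D1 T1) × ↥(restrictDomain D2 T2) →
        ↥(restrictDomain D T) := fun p =>
      ⟨fun x y => (if p.1 then concatAB (key1 p.2.1).choose (key2 p.2.2).choose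
          else concatBA (key1 p.2.1).choose (key2 p.2.2).choose) x.1 y.1,
        (if p.1 then concatAB (key1 p.2.1).choose (key2 p.2.2).choose
          else concatBA (key1 p.2.1).choose (key2 p.2.2).choose),
        ⟨(key1 p.2.1).choose, (key1 p.2.1).choose_spec.1,
         (key2 p.2.2).choose, (key2 p.2.2).choose_spec.1, by
          cases p.1 <;> simp⟩, rfl⟩ with hf
    have hinj : Function.Injective f := by
      rintro ⟨b, r1, r2⟩ ⟨b', r1', r2'⟩ h
      have hval : (fun (x y : T) =>
          (if b then concatAB (key1 r1).choose (key2 r2).choose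
            else concatBA (key1 r1).choose (key2 r2).choose) x.1 y.1) =
          (fun (x y : T) =>
          (if b' then concatAB (key1 r1').choose (key2 r2').choose
            else concatBA (key1 r1').choose (key2 r2').choose) x.1 y.1) :=
        congrArg Subtype.val h
      have hb : b = b' := by
        have h' := congrFun (congrFun hval ⟨Sum.inl a0, ha0⟩) ⟨Sum.inr c0, hc0⟩
        cases b <;> cases b' <;>
          first | rfl | (simp [concatAB, concatBA] at h')
      subst hb
      have hr1 : r1 = r1' := by
        apply Subtype.ext; funext a c
        have h' := congrFun (congrFun hval ⟨Sum.inl a.1, a.2⟩) ⟨Sum.inl c.1, c.2⟩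
        rw [(key1 r1).choose_spec.2 a c, (key1 r1').choose_spec.2 a c]
        cases b <;> simpa [concatAB, concatBA] using h'
      have hr2 : r2 = r2' := by
        apply Subtype.ext; funext a c
        have h' := congrFun (congrFun hval ⟨Sum.inr a.1, a.2⟩) ⟨Sum.inr c.1, c.2⟩
        rw [(key2 r2).choose_spec.2 a c, (key2 r2').choose_spec.2 a c]
        cases b <;> simpa [concatAB, concatBA] using h'
      rw [hr1, hr2]
    have hcardprod : Nat.card (Bool × ↥(restrictDomain D1 T1) × ↥(restrictDomain D2 T2))
        = 2 * (Nat.card ↥(restrictDomain D1 T1) * Nat.card ↥(restrictDomain D2 T2)) := by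
      have hbool : Nat.card Bool = 2 := by
        rw [Nat.card_eq_fintype_card]; rfl
      rw [Nat.card_prod, Nat.card_prod, hbool]
    have hle := Nat.card_le_card_of_injective f hinj
    rw [hcardprod] at hle
    have hpow : 2 ^ (T.ncard - 1) ≤
        2 * (2 ^ (T1.ncard - 1) * 2 ^ (T2.ncard - 1)) := by
      have : T.ncard - 1 = 1 + ((T1.ncard - 1) + (T2.ncard - 1)) := by omega
      rw [this, pow_add, pow_add]
      norm_num
    calc 2 ^ (T.ncard - 1) ≤ 2 * (2 ^ (T1.ncard - 1) * 2 ^ (T2.ncard - 1)) := hpow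
      _ ≤ 2 * (Nat.card ↥(restrictDomain D1 T1) * Nat.card ↥(restrictDomain D2 T2)) := by
          have := h1 T1 h1pos hT1le
          have := h2 T2 h2pos hT2le
          exact Nat.mul_le_mul_left _ (Nat.mul_le_mul ‹_› ‹_›)
      _ ≤ Nat.card ↥(restrictDomain D T) := hle
end

section
/- Every Condorcet domain on a 3-element set of alternatives has size at most 4. -/
/-!
The six linear orders on `{0, 1, 2}` split into two Condorcet cycles: the rotations of
`0 > 1 > 2` and those of `0 > 2 > 1`. A Condorcet domain cannot contain a whole cycle, since the
three-voter profile formed by it has a cyclic majority relation; so it misses at least one order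
of each cycle, leaving at most four.

To count, a strict total order `r` on `Fin 3` is encoded by the orientations `i ↦ r i (i + 1)`
of the three pairs `{i, i + 1}`. This code determines `r`, is never constant (a constant code is a
3-cycle), and the two Condorcet cycles are the codes with two, respectively one, `true`.
-/

section StrictTotalOrder

variable {α : Type*} {r : α → α → Prop} {a b : α}

theorem rel_of_not_rel [Std.Trichotomous r] (hab : a ≠ b) (h : ¬ r a b) : r b a :=
  by_contra fun h' => hab (Std.Trichotomous.trichotomous a b h h')

theorem rel_iff_not_rel [Std.Asymm r] [Std.Trichotomous r] (hab : a ≠ b) : r b a ↔ ¬ r a b :=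
  ⟨asymm, rel_of_not_rel hab⟩

end StrictTotalOrder

theorem natCard_subtype_fin_three (p : Fin 3 → Prop) [DecidablePred p] :
    Nat.card {i // p i} =
      (if p 0 then 1 else 0) + (if p 1 then 1 else 0) + (if p 2 then 1 else 0) := by
  rw [Nat.card_eq_fintype_card, Fintype.card_subtype, Finset.card_filter, Fin.sum_univ_three]

theorem IsCondorcetDomain.false_of_cycle {α : Type*} {D : Set (α → α → Prop)}
    (hD : IsCondorcetDomain D) {r₁ r₂ r₃ : α → α → Prop} (h₁ : r₁ ∈ D) (h₂ : r₂ ∈ D)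
    (h₃ : r₃ ∈ D) {a b c : α} (h₁ab : r₁ a b) (h₁bc : r₁ b c) (h₂bc : r₂ b c) (h₂ca : r₂ c a)
    (h₃ca : r₃ c a) (h₃ab : r₃ a b) : False := by
  have := hD.1 r₁ h₁
  have := hD.1 r₂ h₂
  have := hD.1 r₃ h₃
  have h₁ac : r₁ a c := _root_.trans h₁ab h₁bc
  have h₂ba : r₂ b a := _root_.trans h₂bc h₂ca
  have h₃cb : r₃ c b := _root_.trans h₃ca h₃ab
  let P : Fin 3 → α → α → Prop := ![r₁, r₂, r₃]
  have hP : ∀ i, P i ∈ D := by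
    intro i
    fin_cases i <;> assumption
  have hmaj := hD.2 3 ⟨1, rfl⟩ P hP
  classical
  have hab : Maj P a b := by
    simp only [Maj, natCard_subtype_fin_three]
    simp [P, h₁ab, h₃ab, h₂ba, asymm h₁ab, asymm h₃ab, asymm h₂ba]
  have hbc : Maj P b c := by
    simp only [Maj, natCard_subtype_fin_three]
    simp [P, h₁bc, h₂bc, h₃cb, asymm h₁bc, asymm h₂bc, asymm h₃cb]
  have hca : Maj P c a := by
    simp only [Maj, natCard_subtype_fin_three]
    simp [P, h₂ca, h₃ca, h₁ac, asymm h₂ca, asymm h₃ca, asymm h₁ac]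
  exact (hmaj hab hbc).asymm hca

theorem Set.ncard_add_two_le_of_subset_union {α : Type*} {S A B : Set α} (hA : A.Finite)
    (hB : B.Finite) (hS : S ⊆ A ∪ B) (hAS : ¬ A ⊆ S) (hBS : ¬ B ⊆ S) :
    S.ncard + 2 ≤ A.ncard + B.ncard := by
  have hSA : (S ∩ A).ncard < A.ncard :=
    Set.ncard_lt_ncard (Set.inter_subset_right.ssubset_of_ne fun h =>
      hAS (h ▸ Set.inter_subset_left)) hA
  have hSB : (S ∩ B).ncard < B.ncard :=
    Set.ncard_lt_ncard (Set.inter_subset_right.ssubset_of_ne fun h =>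
      hBS (h ▸ Set.inter_subset_left)) hB
  have hS' : S.ncard ≤ (S ∩ A).ncard + (S ∩ B).ncard := calc
    S.ncard = (S ∩ A ∪ S ∩ B).ncard := by
      rw [← Set.inter_union_distrib_left, Set.inter_eq_left.2 hS]
    _ ≤ _ := Set.ncard_union_le _ _
  omega

theorem Fin.three_eq_add_one_or_eq_add_one {a b : Fin 3} (hab : a ≠ b) :
    b = a + 1 ∨ a = b + 1 := by
  revert a b; decide

open Classical in
noncomputable def cycCode (r : Fin 3 → Fin 3 → Prop) (i : Fin 3) : Bool :=
  decide (r i (i + 1))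

section cycCode

variable {r s : Fin 3 → Fin 3 → Prop}

theorem rel_of_cycCode_eq_true {i : Fin 3} (h : cycCode r i = true) : r i (i + 1) := by
  simpa [cycCode] using h

theorem rel_of_cycCode_eq_false [Std.Trichotomous r] {i : Fin 3} (h : cycCode r i = false) :
    r (i + 1) i :=
  rel_of_not_rel (by clear h; revert i; decide) (by simpa [cycCode] using h)

theorem eq_of_cycCode_eq [IsStrictTotalOrder (Fin 3) r] [IsStrictTotalOrder (Fin 3) s]
    (h : cycCode r = cycCode s) : r = s := by
  have key : ∀ i, r i (i + 1) ↔ s i (i + 1) := fun i => by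
    simpa [cycCode] using congrFun h i
  funext a b
  apply propext
  rcases eq_or_ne a b with rfl | hab
  · exact iff_of_false (irrefl a) (irrefl a)
  rcases Fin.three_eq_add_one_or_eq_add_one hab with rfl | rfl
  · exact key a
  · rw [rel_iff_not_rel (r := r) hab.symm, rel_iff_not_rel (r := s) hab.symm, key b]

theorem cycCode_ne_const [IsStrictTotalOrder (Fin 3) r] (x : Bool) :
    cycCode r ≠ fun _ => x := by
  intro h
  cases x
  · have h₀ := rel_of_cycCode_eq_false (congrFun h 0)
    have h₁ := rel_of_cycCode_eq_false (congrFun h 1)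
    have h₂ := rel_of_cycCode_eq_false (congrFun h 2)
    exact irrefl _ (_root_.trans (_root_.trans h₂ h₁) h₀)
  · have h₀ := rel_of_cycCode_eq_true (congrFun h 0)
    have h₁ := rel_of_cycCode_eq_true (congrFun h 1)
    have h₂ := rel_of_cycCode_eq_true (congrFun h 2)
    exact irrefl _ (_root_.trans (_root_.trans h₀ h₁) h₂)

end cycCode

def cycleCodes₀₁₂ : Finset (Fin 3 → Bool) :=
  {![true, true, false], ![false, true, true], ![true, false, true]}

def cycleCodes₀₂₁ : Finset (Fin 3 → Bool) :=
  {![false, false, true], ![true, false, false], ![false, true, false]}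

theorem mem_cycleCodes_of_ne_const {c : Fin 3 → Bool} (hc : ∀ x, c ≠ fun _ => x) :
    c ∈ (↑cycleCodes₀₁₂ ∪ ↑cycleCodes₀₂₁ : Set (Fin 3 → Bool)) := by
  revert c; decide

namespace IsCondorcetDomain

variable {D : Set (Fin 3 → Fin 3 → Prop)} (hD : IsCondorcetDomain D)
include hD

theorem injOn_cycCode : Set.InjOn cycCode D := fun r hr s hs h =>
  have := hD.1 r hr
  have := hD.1 s hs
  eq_of_cycCode_eq h

theorem image_cycCode_subset : cycCode '' D ⊆ ↑cycleCodes₀₁₂ ∪ ↑cycleCodes₀₂₁ := by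
  rintro _ ⟨r, hr, rfl⟩
  have := hD.1 r hr
  exact mem_cycleCodes_of_ne_const cycCode_ne_const

theorem not_cycleCodes₀₁₂_subset : ¬ ↑cycleCodes₀₁₂ ⊆ cycCode '' D := by
  intro h
  obtain ⟨r₁, h₁, e₁⟩ := h (by simp [cycleCodes₀₁₂] : ![true, true, false] ∈ _)
  obtain ⟨r₂, h₂, e₂⟩ := h (by simp [cycleCodes₀₁₂] : ![false, true, true] ∈ _)
  obtain ⟨r₃, h₃, e₃⟩ := h (by simp [cycleCodes₀₁₂] : ![true, false, true] ∈ _)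
  exact hD.false_of_cycle h₁ h₂ h₃ (a := 0) (b := 1) (c := 2)
    (rel_of_cycCode_eq_true (congrFun e₁ 0)) (rel_of_cycCode_eq_true (congrFun e₁ 1))
    (rel_of_cycCode_eq_true (congrFun e₂ 1)) (rel_of_cycCode_eq_true (congrFun e₂ 2))
    (rel_of_cycCode_eq_true (congrFun e₃ 2)) (rel_of_cycCode_eq_true (congrFun e₃ 0))

theorem not_cycleCodes₀₂₁_subset : ¬ ↑cycleCodes₀₂₁ ⊆ cycCode '' D := by
  intro h
  obtain ⟨r₁, h₁, e₁⟩ := h (by simp [cycleCodes₀₂₁] : ![false, false, true] ∈ _)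
  obtain ⟨r₂, h₂, e₂⟩ := h (by simp [cycleCodes₀₂₁] : ![false, true, false] ∈ _)
  obtain ⟨r₃, h₃, e₃⟩ := h (by simp [cycleCodes₀₂₁] : ![true, false, false] ∈ _)
  have := hD.1 r₁ h₁
  have := hD.1 r₂ h₂
  have := hD.1 r₃ h₃
  exact hD.false_of_cycle h₁ h₂ h₃ (a := 2) (b := 1) (c := 0)
    (rel_of_cycCode_eq_false (congrFun e₁ 1)) (rel_of_cycCode_eq_false (congrFun e₁ 0))
    (rel_of_cycCode_eq_false (congrFun e₂ 0)) (rel_of_cycCode_eq_false (congrFun e₂ 2))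
    (rel_of_cycCode_eq_false (congrFun e₃ 2)) (rel_of_cycCode_eq_false (congrFun e₃ 1))

end IsCondorcetDomain

/-- Every Condorcet domain on a 3-element set of alternatives has size at most 4. -/
theorem condorcet_card_le_four (D : Set (Fin 3 → Fin 3 → Prop))
    (hD : IsCondorcetDomain D) : Nat.card D ≤ 4 := by
  have hcount := Set.ncard_add_two_le_of_subset_union (Finset.finite_toSet _)
    (Finset.finite_toSet _) hD.image_cycCode_subset hD.not_cycleCodes₀₁₂_subset
    hD.not_cycleCodes₀₂₁_subset
  rw [hD.injOn_cycCode.ncard_image, Set.ncard_coe_finset, Set.ncard_coe_finset] at hcount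
  have h₀₁₂ : cycleCodes₀₁₂.card = 3 := rfl
  have h₀₂₁ : cycleCodes₀₂₁.card = 3 := rfl
  rw [Nat.card_coe_set_eq]
  omega
end

section
/- The set of linear orders on {1,...,n} that, for every triple i < j < k, never place j in last position among {i,j,k} (i.e., satisfy the never condition 2N3 on every triple) is a Condorcet domain of size exactly 2^{n−1}, and it equals Black's single-peaked domain with respect to the axis 1 < 2 < ... < n. -/
/-- A linear order on `Fin n` is single-peaked with respect to the axis
`0 < 1 < ⋯ < n-1` if there is a peak `p` such that among alternatives on the same
side of `p`, the one closer to `p` is preferred. -/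
def SinglePeaked {n : ℕ} (r : Fin n → Fin n → Prop) : Prop :=
  IsStrictTotalOrder (Fin n) r ∧
  ∃ p : Fin n, (∀ i j : Fin n, i < j → j ≤ p → r j i) ∧
    (∀ i j : Fin n, p ≤ i → i < j → r i j)

/-!
For three alternatives, the middle one `y` is never ranked last by a never-middle-bottom order,
so every voter putting `x` above `y` also puts `x` above `z`: a majority for `x` over `y` is one
for `x` over `z`. A majority cycle through the middle alternative is therefore impossible (Sen's
value restriction), and with an odd number of voters this is transitivity.

Such an order ranks `0` or `n - 1` last, because any other alternative ranked last would be the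
middle one of a triple. Deleting it gives an order of the same kind on `n - 1` alternatives, and
for each endpoint this is a bijection, which doubles the count at each step. The top-ranked
alternative is a peak: an alternative ranked below its outer neighbour on one side of it would be
the middle one of a triple ranked last.
-/

open Function

lemma IsStrictTotalOrder.rel_swap_iff {α : Type*} {r : α → α → Prop} (h : IsStrictTotalOrder α r)
    {a b : α} (hab : a ≠ b) : r b a ↔ ¬ r a b :=
  ⟨asymm, fun hba => ((trichotomous a b).resolve_left hba).resolve_left hab⟩

lemma exists_forall_ne_rel {α : Type*} [Finite α] [Nonempty α] (r : α → α → Prop)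
    [h : IsStrictTotalOrder α r] : ∃ p, ∀ y, y ≠ p → r p y := by
  obtain ⟨p, -, hp⟩ := (Finite.wellFounded_of_trans_of_irrefl r).has_min Set.univ Set.univ_nonempty
  exact ⟨p, fun y hy => (h.rel_swap_iff hy).2 (hp y trivial)⟩

section Majority

variable {α : Type*} {k : ℕ} {P : Fin k → α → α → Prop}

lemma card_rel_add_card_rel_swap (hP : ∀ i, IsStrictTotalOrder α (P i)) {a b : α} (hab : a ≠ b) :
    Nat.card {i // P i a b} + Nat.card {i // P i b a} = k := by
  classical
  simp only [(hP _).rel_swap_iff hab, Nat.card_eq_fintype_card, Fintype.card_subtype_compl]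
  have := Fintype.card_subtype_le fun i => P i a b
  simp only [Fintype.card_fin] at *
  omega

lemma ne_of_maj {a b : α} (h : Maj P a b) : a ≠ b := by
  rintro rfl
  exact lt_irrefl _ h

lemma maj_or_maj_swap (hk : Odd k) (hP : ∀ i, IsStrictTotalOrder α (P i)) {a b : α}
    (hab : a ≠ b) : Maj P a b ∨ Maj P b a := by
  have := card_rel_add_card_rel_swap hP hab
  obtain ⟨t, rfl⟩ := hk
  unfold Maj
  omega

lemma maj_of_maj_of_neverBottom (hP : ∀ i, IsStrictTotalOrder α (P i)) {x y z : α}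
    (hxz : x ≠ z) (hy : ∀ i, ¬ (P i x y ∧ P i z y)) (hxy : Maj P x y) : Maj P x z := by
  rcases eq_or_ne z y with rfl | hzy
  · exact hxy
  have hle : Nat.card {i // P i x y} ≤ Nat.card {i // P i x z} :=
    Nat.card_mono (Set.toFinite _) fun i hi => trans hi
      (((hP i).rel_swap_iff hzy).2 fun hrzy => hy i ⟨hi, hrzy⟩)
  have := card_rel_add_card_rel_swap hP (ne_of_maj hxy)
  have := card_rel_add_card_rel_swap hP hxz
  unfold Maj at *
  omega

end Majority

def neverMiddleBottomDomain (α : Type*) [LinearOrder α] : Set (α → α → Prop) :=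
  {r | IsStrictTotalOrder α r ∧ ∀ i j k : α, i < j → j < k → ¬ (r i j ∧ r k j)}

section Domain

variable {α β : Type*} [LinearOrder α] [LinearOrder β] {r : α → α → Prop}

lemma neverMiddleBottomDomain.not_rel_and_rel (hr : r ∈ neverMiddleBottomDomain α) {x y z : α}
    (hy : x < y ∧ y < z ∨ z < y ∧ y < x) : ¬ (r x y ∧ r z y) := by
  rcases hy with ⟨hxy, hyz⟩ | ⟨hzy, hyx⟩
  · exact hr.2 x y z hxy hyz
  · exact fun h => hr.2 z y x hzy hyx h.symm

theorem isCondorcetDomain_neverMiddleBottomDomain :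
    IsCondorcetDomain (neverMiddleBottomDomain α) := by
  refine ⟨fun r hr => hr.1, fun k hk P hP a b c hab hbc => ?_⟩
  have hsto i := (hP i).1
  have no_cycle {x y z : α} (hxy : Maj P x y) (hzx : Maj P z x) :
      ¬ (x < y ∧ y < z ∨ z < y ∧ y < x) := fun hy =>
    lt_asymm hzx <| maj_of_maj_of_neverBottom hsto (ne_of_maj hzx).symm
      (fun i => neverMiddleBottomDomain.not_rel_and_rel (hP i) hy) hxy
  by_contra hac
  have hca : Maj P c a := by
    refine (maj_or_maj_swap hk hsto ?_).resolve_left hac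
    rintro rfl
    exact lt_asymm hab hbc
  have := no_cycle hab hca
  have := no_cycle hbc hab
  have := no_cycle hca hbc
  have := ne_of_maj hab
  have := ne_of_maj hbc
  have := ne_of_maj hca
  -- one of the three distinct alternatives `a`, `b`, `c` lies between the other two
  grind

lemma lt_mem_neverMiddleBottomDomain : ((· < ·) : α → α → Prop) ∈ neverMiddleBottomDomain α :=
  ⟨inferInstance, fun _ _ _ _ hjk h => hjk.not_gt h.2⟩

lemma eq_lt_of_mem_neverMiddleBottomDomain [Subsingleton α] (hr : r ∈ neverMiddleBottomDomain α) :
    r = (· < ·) := by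
  funext x y
  obtain rfl := Subsingleton.elim x y
  simpa using hr.1.irrefl x

lemma onFun_mem_neverMiddleBottomDomain {e : β → α} (he : StrictMono e)
    (hr : r ∈ neverMiddleBottomDomain α) : (r on e) ∈ neverMiddleBottomDomain β :=
  have := hr.1
  ⟨(RelEmbedding.preimage ⟨e, he.injective⟩ r).isStrictTotalOrder,
    fun i j k hij hjk => hr.2 (e i) (e j) (e k) (he hij) (he hjk)⟩

end Domain

section Counting

variable {m : ℕ}

/-- Ranks `w` last and the other alternatives by `s`, transported along `w.succAbove`. -/
def extendWorst (w : Fin (m + 2)) (s : Fin (m + 1) → Fin (m + 1) → Prop) :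
    Fin (m + 2) → Fin (m + 2) → Prop :=
  Fin.insertNth w (fun _ => False) fun x => Fin.insertNth w True (s x)

@[simp] lemma extendWorst_self_left (w : Fin (m + 2)) (s : Fin (m + 1) → Fin (m + 1) → Prop)
    (y : Fin (m + 2)) : ¬ extendWorst w s w y := by
  simp [extendWorst]

@[simp] lemma extendWorst_succAbove_self (w : Fin (m + 2)) (s : Fin (m + 1) → Fin (m + 1) → Prop)
    (x : Fin (m + 1)) : extendWorst w s (w.succAbove x) w := by
  simp [extendWorst]

@[simp] lemma extendWorst_succAbove_succAbove (w : Fin (m + 2))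
    (s : Fin (m + 1) → Fin (m + 1) → Prop) (x y : Fin (m + 1)) :
    extendWorst w s (w.succAbove x) (w.succAbove y) ↔ s x y := by
  simp [extendWorst]

lemma isStrictTotalOrder_extendWorst (w : Fin (m + 2)) {s : Fin (m + 1) → Fin (m + 1) → Prop}
    (hs : IsStrictTotalOrder _ s) : IsStrictTotalOrder _ (extendWorst w s) where
  trichotomous x y hxy hyx := by
    induction x using Fin.succAboveCases w <;>
      induction y using Fin.succAboveCases w <;> simp_all
    exact hs.trichotomous _ _ hxy hyx
  irrefl x := by
    induction x using Fin.succAboveCases w <;> simp [hs.irrefl]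
  trans x y z hxy hyz := by
    induction x using Fin.succAboveCases w <;>
      induction y using Fin.succAboveCases w <;>
      induction z using Fin.succAboveCases w <;> simp_all
    exact hs.trans _ _ _ hxy hyz

lemma extendWorst_mem_neverMiddleBottomDomain {w : Fin (m + 2)} (hw : w = 0 ∨ w = Fin.last _)
    {s : Fin (m + 1) → Fin (m + 1) → Prop} (hs : s ∈ neverMiddleBottomDomain _) :
    extendWorst w s ∈ neverMiddleBottomDomain _ := by
  refine ⟨isStrictTotalOrder_extendWorst w hs.1, fun i j k hij hjk => ?_⟩
  obtain rfl | ⟨i, rfl⟩ := w.eq_self_or_eq_succAbove i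
  · simp
  obtain rfl | ⟨k, rfl⟩ := w.eq_self_or_eq_succAbove k
  · simp
  obtain rfl | ⟨j, rfl⟩ := w.eq_self_or_eq_succAbove j
  · rcases hw with rfl | rfl
    · exact absurd hij (Fin.not_lt_zero _)
    · exact absurd hjk (Fin.le_last _).not_gt
  simp only [extendWorst_succAbove_succAbove]
  exact hs.2 i j k ((Fin.strictMono_succAbove w).lt_iff_lt.1 hij)
    ((Fin.strictMono_succAbove w).lt_iff_lt.1 hjk)

lemma onFun_succAbove_extendWorst (w : Fin (m + 2)) (s : Fin (m + 1) → Fin (m + 1) → Prop) :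
    (extendWorst w s on w.succAbove) = s := by
  funext x y
  simp [Function.onFun]

lemma injOn_onFun_succAbove (w : Fin (m + 2)) :
    Set.InjOn (· on w.succAbove) {r | IsStrictTotalOrder _ r ∧ ∀ y, y ≠ w → r y w} := by
  rintro r ⟨hr, hrw⟩ r' ⟨hr', hr'w⟩ heq
  funext x y
  obtain hy | ⟨y, rfl⟩ := w.eq_self_or_eq_succAbove y
  · subst y
    by_cases hx : x = w
    · subst x
      simp [hr.irrefl, hr'.irrefl]
    · simp [hrw x hx, hr'w x hx]
  obtain hx | ⟨x, rfl⟩ := w.eq_self_or_eq_succAbove x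
  · subst x
    have := w.succAbove_ne y
    simp only [asymm (hrw _ this), asymm (hr'w _ this)]
  · exact congrFun₂ heq x y

lemma ncard_neverMiddleBottomDomain_worst {w : Fin (m + 2)} (hw : w = 0 ∨ w = Fin.last _) :
    {r ∈ neverMiddleBottomDomain _ | ∀ y, y ≠ w → r y w}.ncard =
      (neverMiddleBottomDomain (Fin (m + 1))).ncard := by
  have himage : (· on w.succAbove) '' {r ∈ neverMiddleBottomDomain _ | ∀ y, y ≠ w → r y w} =
      neverMiddleBottomDomain (Fin (m + 1)) := by
    refine Set.Subset.antisymm (Set.image_subset_iff.2 fun r hr => ?_) fun s hs => ?_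
    · exact onFun_mem_neverMiddleBottomDomain (Fin.strictMono_succAbove w) hr.1
    · refine ⟨extendWorst w s, ?_, onFun_succAbove_extendWorst w s⟩
      refine ⟨extendWorst_mem_neverMiddleBottomDomain hw hs, fun y hy => ?_⟩
      obtain ⟨y, rfl⟩ := Fin.exists_succAbove_eq hy
      simp
  rw [← himage, Set.InjOn.ncard_image]
  refine (injOn_onFun_succAbove w).mono ?_
  exact fun r hr => ⟨hr.1.1, hr.2⟩

lemma neverMiddleBottomDomain_eq_union :
    neverMiddleBottomDomain (Fin (m + 2)) =
      {r ∈ neverMiddleBottomDomain _ | ∀ y, y ≠ 0 → r y 0} ∪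
        {r ∈ neverMiddleBottomDomain _ | ∀ y, y ≠ Fin.last _ → r y (Fin.last _)} := by
  refine Set.Subset.antisymm (fun r hr => ?_)
    (Set.union_subset (Set.sep_subset _ _) (Set.sep_subset _ _))
  have := hr.1
  obtain ⟨w, hw⟩ := exists_forall_ne_rel (swap r)
  by_cases h0 : w = 0
  · exact Or.inl ⟨hr, h0 ▸ hw⟩
  by_cases hlast : w = Fin.last _
  · exact Or.inr ⟨hr, hlast ▸ hw⟩
  exact absurd ⟨hw 0 (Ne.symm h0), hw _ (Ne.symm hlast)⟩
    (hr.2 0 w _ (Fin.pos_of_ne_zero h0) (Fin.lt_last_iff_ne_last.2 hlast))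

lemma disjoint_neverMiddleBottomDomain_worst_zero_last :
    Disjoint {r ∈ neverMiddleBottomDomain (Fin (m + 2)) | ∀ y, y ≠ 0 → r y 0}
      {r ∈ neverMiddleBottomDomain _ | ∀ y, y ≠ Fin.last _ → r y (Fin.last _)} := by
  refine Set.disjoint_left.2 fun r ⟨hr, h0⟩ ⟨_, hlast⟩ => ?_
  have := hr.1
  have hne : (0 : Fin (m + 2)) ≠ Fin.last _ := Fin.last_pos.ne
  exact asymm (h0 _ hne.symm) (hlast _ hne)

theorem card_neverMiddleBottomDomain_fin (m : ℕ) :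
    Nat.card (neverMiddleBottomDomain (Fin (m + 1))) = 2 ^ m := by
  induction m with
  | zero =>
    rw [Nat.card_coe_set_eq, pow_zero, Set.ncard_eq_one]
    exact ⟨(· < ·), Set.eq_singleton_iff_unique_mem.2
      ⟨lt_mem_neverMiddleBottomDomain, fun _ => eq_lt_of_mem_neverMiddleBottomDomain (α := Fin 1)⟩⟩
  | succ m ih =>
    rw [Nat.card_coe_set_eq, neverMiddleBottomDomain_eq_union,
      Set.ncard_union_eq disjoint_neverMiddleBottomDomain_worst_zero_last,
      ncard_neverMiddleBottomDomain_worst (Or.inl rfl),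
      ncard_neverMiddleBottomDomain_worst (Or.inr rfl), ← Nat.card_coe_set_eq, ih, pow_succ]
    ring

end Counting

section SinglePeaked

variable {n : ℕ} {r : Fin n → Fin n → Prop}

lemma singlePeaked_of_mem_neverMiddleBottomDomain [NeZero n]
    (hr : r ∈ neverMiddleBottomDomain (Fin n)) : SinglePeaked r := by
  have := hr.1
  obtain ⟨p, hp⟩ := exists_forall_ne_rel r
  refine ⟨hr.1, p, fun i j hij hjp => ?_, fun i j hpi hij => ?_⟩
  · refine (hr.1.rel_swap_iff hij.ne).2 fun hij' => ?_
    rcases hjp.eq_or_lt with rfl | hjp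
    · exact asymm (hp i hij.ne) hij'
    · exact hr.2 i j p hij hjp ⟨hij', hp j hjp.ne⟩
  · refine (hr.1.rel_swap_iff hij.ne').2 fun hji => ?_
    rcases hpi.eq_or_lt with rfl | hpi
    · exact asymm (hp j hij.ne') hji
    · exact hr.2 p i j hpi hij ⟨hp i hpi.ne', hji⟩

lemma mem_neverMiddleBottomDomain_of_singlePeaked (hr : SinglePeaked r) :
    r ∈ neverMiddleBottomDomain (Fin n) := by
  obtain ⟨hsto, p, hleft, hright⟩ := hr
  refine ⟨hsto, fun i j k hij hjk ⟨hji, hjk'⟩ => ?_⟩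
  rcases le_total j p with hjp | hpj
  · exact asymm (hleft i j hij hjp) hji
  · exact asymm (hright j k hpj hjk) hjk'

end SinglePeaked

/-- The set of linear orders on `{1,…,n}` satisfying the never condition `2N3` on
every triple is a Condorcet domain of size exactly `2^{n-1}`, and it equals Black's
single-peaked domain with respect to the axis `1 < 2 < ⋯ < n`. -/
theorem never_middle_bottom_domain (n : ℕ) (hn : 1 ≤ n) :
    IsCondorcetDomain {r : Fin n → Fin n → Prop |
        IsStrictTotalOrder (Fin n) r ∧
        ∀ i j k : Fin n, i < j → j < k → ¬ (r i j ∧ r k j)} ∧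
    Nat.card {r : Fin n → Fin n → Prop |
        IsStrictTotalOrder (Fin n) r ∧
        ∀ i j k : Fin n, i < j → j < k → ¬ (r i j ∧ r k j)} = 2 ^ (n - 1) ∧
    {r : Fin n → Fin n → Prop |
        IsStrictTotalOrder (Fin n) r ∧
        ∀ i j k : Fin n, i < j → j < k → ¬ (r i j ∧ r k j)} =
      {r : Fin n → Fin n → Prop | SinglePeaked r} := by
  obtain ⟨m, rfl⟩ : ∃ m, n = m + 1 := ⟨n - 1, by omega⟩
  refine ⟨isCondorcetDomain_neverMiddleBottomDomain, card_neverMiddleBottomDomain_fin m,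
    Set.ext fun r => ⟨singlePeaked_of_mem_neverMiddleBottomDomain,
      mem_neverMiddleBottomDomain_of_singlePeaked⟩⟩
end
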